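/- arXiv:2405.19634 — 4 statements merged into one kernel-verified Lean document; each statement's English description precedes it below -/
import Mathlib

section
/- (Eklof's Lemma) Let B be an R-module and let ⟨M_i : i ≤ ζ⟩ be a continuous increasing chain of R-modules with M_0 = 0 and M_ζ = M, such that for every i < ζ, Ext^1_R(M_{i+1}/M_i, B) = 0. Then Ext^1_R(M, B) = 0. -/
/-!
A sequence `0 → B → E → A → 0` splits iff `p : E → A` has a section, and sections are built
along the chain. A section `s` over `N ≤ N'` extends over `N'`: the sequence
`0 → B → p⁻¹(N') ⧸ s(N) → N' ⧸ N → 0` is exact, and a splitting `t` of it yields the extension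
`x ↦` the unique `e` with `p e = x` and `[e] = t [x]` (unique because `ker p ∩ s(N) = 0`).
At limit stages the sections glue along the union, by continuity of the chain. Zorn's lemma,
applied to pairs (stage, section over that stage), replaces the transfinite recursion.
-/

universe u v

/-- `Ext¹_R(A, B) = 0`, phrased via the standard characterization: every short exact
sequence `0 → B → E → A → 0` splits. -/
def Ext1Zero (R : Type v) [Ring R] (A B : Type u) [AddCommGroup A] [Module R A]
    [AddCommGroup B] [Module R B] : Prop :=
  ∀ (E : Type u) [AddCommGroup E] [Module R E],
    ∀ (i : B →ₗ[R] E) (p : E →ₗ[R] A),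
      Function.Injective i → Function.Surjective p →
        LinearMap.range i = LinearMap.ker p →
          ∃ s : A →ₗ[R] E, p ∘ₗ s = LinearMap.id

theorem Monotone.apply_csSup_eq_biSup {ι α : Type*} [ConditionallyCompleteLinearOrder ι]
    [CompleteLattice α] {M : ι → α} (hmono : Monotone M) {ζ : ι}
    (hcont : ∀ i ≤ ζ, Order.IsSuccLimit i → M i = ⨆ j < i, M j)
    {S : Set ι} (hne : S.Nonempty) (hS : ∀ j ∈ S, j ≤ ζ) :
    M (sSup S) = ⨆ j ∈ S, M j := by
  have hbdd : BddAbove S := ⟨ζ, hS⟩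
  refine le_antisymm ?_ (iSup₂_le fun j hj => hmono (le_csSup hbdd hj))
  by_cases hlim : Order.IsSuccLimit (sSup S)
  · rw [hcont _ (csSup_le hne hS) hlim]
    refine iSup₂_le fun j hj => ?_
    obtain ⟨k, hk, hjk⟩ := exists_lt_of_lt_csSup hne hj
    exact le_iSup₂_of_le k hk (hmono hjk.le)
  · exact le_iSup₂ (f := fun j _ => M j) _ (csSup_mem_of_not_isSuccLimit hne hbdd hlim)

section QuotientByRangeOfSection

variable {R A B E : Type*} [Ring R] [AddCommGroup A] [Module R A]
  [AddCommGroup B] [Module R B] [AddCommGroup E] [Module R E]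
  {i : B →ₗ[R] E} {p : E →ₗ[R] A} {N : Submodule R A} {s : N →ₗ[R] E}

theorem eq_zero_of_mem_range_section (hs : ∀ x, p (s x) = x) {e : E}
    (he : e ∈ LinearMap.range s) (hpe : p e = 0) : e = 0 := by
  obtain ⟨x, rfl⟩ := he
  rw [show x = 0 from Subtype.ext ((hs x).symm.trans hpe), map_zero]

theorem range_section_le_comap (hs : ∀ x, p (s x) = x) :
    LinearMap.range s ≤ N.comap p := by
  rintro _ ⟨x, rfl⟩
  simp [Submodule.mem_comap, hs]

theorem injective_mkQ_comp_of_section (hi : Function.Injective i) (hexact : Function.Exact i p)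
    (hs : ∀ x, p (s x) = x) : Function.Injective ((LinearMap.range s).mkQ ∘ₗ i) := by
  refine (injective_iff_map_eq_zero _).2 fun b hb => hi ?_
  rw [map_zero]
  refine eq_zero_of_mem_range_section hs ?_ (hexact.apply_apply_eq_zero b)
  simpa [Submodule.Quotient.mk_eq_zero] using hb

theorem surjective_mapQ_of_section (hp : Function.Surjective p) (hs : ∀ x, p (s x) = x) :
    Function.Surjective ((LinearMap.range s).mapQ N p (range_section_le_comap hs)) := by
  rintro ⟨x⟩
  obtain ⟨e, rfl⟩ := hp x
  exact ⟨Submodule.Quotient.mk e, rfl⟩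

theorem exact_mkQ_comp_mapQ_of_section (hexact : Function.Exact i p) (hs : ∀ x, p (s x) = x) :
    Function.Exact ((LinearMap.range s).mkQ ∘ₗ i)
      ((LinearMap.range s).mapQ N p (range_section_le_comap hs)) := by
  rintro ⟨e⟩
  simp only [Submodule.Quotient.quot_mk_eq_mk, Submodule.mapQ_apply,
    Submodule.Quotient.mk_eq_zero, Set.mem_range, LinearMap.coe_comp, Function.comp_apply,
    Submodule.mkQ_apply]
  constructor
  · intro hpe
    obtain ⟨b, hb⟩ := (hexact (e - s ⟨p e, hpe⟩)).1 (by simp [hs])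
    refine ⟨b, (Submodule.Quotient.eq _).2 ?_⟩
    rw [hb, sub_sub_cancel_left]
    exact neg_mem (LinearMap.mem_range_self s _)
  · rintro ⟨b, hb⟩
    have := range_section_le_comap hs ((Submodule.Quotient.eq _).1 hb.symm)
    simpa [hexact.apply_apply_eq_zero] using this

theorem injective_prod_mkQ_of_section (hs : ∀ x, p (s x) = x) :
    Function.Injective (p.prod (LinearMap.range s).mkQ) := by
  refine (injective_iff_map_eq_zero _).2 fun e he => ?_
  obtain ⟨hpe, hqe⟩ := Prod.ext_iff.1 he
  exact eq_zero_of_mem_range_section hs ((Submodule.Quotient.mk_eq_zero _).1 hqe) hpe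

theorem mk_mem_range_prod_mkQ_of_section (hs : ∀ x, p (s x) = x) {x : A}
    {q : E ⧸ LinearMap.range s}
    (hq : (LinearMap.range s).mapQ N p (range_section_le_comap hs) q = N.mkQ x) :
    (x, q) ∈ LinearMap.range (p.prod (LinearMap.range s).mkQ) := by
  induction q using Submodule.Quotient.induction_on with | _ e => ?_
  have hn : p e - x ∈ N := by
    simpa [Submodule.Quotient.eq] using hq
  refine ⟨e - s ⟨p e - x, hn⟩, ?_⟩
  simp [hs]

end QuotientByRangeOfSection

section PartialSections

variable {R A E : Type*} [Ring R] [AddCommGroup A] [Module R A] [AddCommGroup E] [Module R E]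
  {p : E →ₗ[R] A}

def IsPartialSection (p : E →ₗ[R] A) (f : A →ₗ.[R] E) : Prop :=
  ∀ x : f.domain, p (f x) = x

theorem isPartialSection_bot : IsPartialSection p (⊥ : A →ₗ.[R] E) := fun x => by
  rw [show x = 0 from Subtype.ext ((Submodule.mem_bot R).1 x.2), LinearPMap.map_zero, map_zero]
  rfl

theorem IsPartialSection.sSup {c : Set (A →ₗ.[R] E)} (hne : c.Nonempty)
    (hc : DirectedOn (· ≤ ·) c) (h : ∀ f ∈ c, IsPartialSection p f) :
    IsPartialSection p (LinearPMap.sSup c hc) := by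
  rintro ⟨x, hx⟩
  obtain ⟨f, hfc, hxf⟩ := (LinearPMap.mem_domain_sSup_iff hne hc).1 hx
  rw [LinearPMap.sSup_apply hc hfc ⟨x, hxf⟩]
  exact h f hfc _

theorem IsPartialSection.exists_section {f : A →ₗ.[R] E} (hf : IsPartialSection p f)
    (htop : f.domain = ⊤) : ∃ s : A →ₗ[R] E, p ∘ₗ s = LinearMap.id :=
  ⟨f.toFun ∘ₗ (LinearEquiv.ofTop _ htop).symm.toLinearMap, LinearMap.ext fun _ => hf _⟩

/-- The stage is recorded next to the section because `M` need not be strictly increasing: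
maximality of the section alone would not force the stage to be `ζ`. -/
def sectionsAlong {ι : Type*} [Preorder ι] (p : E →ₗ[R] A) (M : ι → Submodule R A) (ζ : ι) :
    Set (ι × (A →ₗ.[R] E)) :=
  {q | q.1 ≤ ζ ∧ q.2.domain = M q.1 ∧ IsPartialSection p q.2}

theorem exists_upperBound_of_isChain_sectionsAlong {ι : Type*}
    [ConditionallyCompleteLinearOrder ι] {M : ι → Submodule R A} {ζ : ι} (hmono : Monotone M)
    (hcont : ∀ i ≤ ζ, Order.IsSuccLimit i → M i = ⨆ j < i, M j)
    {c : Set (ι × (A →ₗ.[R] E))} (hsub : c ⊆ sectionsAlong p M ζ) (hc : IsChain (· ≤ ·) c)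
    (hne : c.Nonempty) : ∃ ub ∈ sectionsAlong p M ζ, ∀ z ∈ c, z ≤ ub := by
  have hdir : DirectedOn (· ≤ ·) (Prod.snd '' c) := (hc.image OrderHom.snd).directedOn
  have hbdd : ∀ k ∈ Prod.fst '' c, k ≤ ζ := by
    rintro _ ⟨q, hq, rfl⟩
    exact (hsub hq).1
  refine ⟨(sSup (Prod.fst '' c), LinearPMap.sSup _ hdir), ⟨csSup_le (hne.image _) hbdd, ?_,
    IsPartialSection.sSup (hne.image _) hdir ?_⟩, fun z hz => ⟨le_csSup ⟨ζ, hbdd⟩ ⟨z, hz, rfl⟩,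
    LinearPMap.le_sSup hdir ⟨z, hz, rfl⟩⟩⟩
  · rw [LinearPMap.domain_sSup, hmono.apply_csSup_eq_biSup hcont (hne.image _) hbdd,
      Set.image_image, sSup_image, iSup_image]
    exact iSup_congr fun q => iSup_congr fun hq => (hsub hq).2.1
  · rintro _ ⟨q, hq, rfl⟩
    exact (hsub hq).2.2

end PartialSections

section Extension

variable {R : Type v} [Ring R] {A B E : Type u} [AddCommGroup A] [Module R A]
  [AddCommGroup B] [Module R B] [AddCommGroup E] [Module R E]
  {i : B →ₗ[R] E} {p : E →ₗ[R] A} {N : Submodule R A}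

theorem exists_extension_of_ext1Zero_quotient (hi : Function.Injective i)
    (hp : Function.Surjective p) (hexact : Function.Exact i p) (hext : Ext1Zero R (A ⧸ N) B)
    {s : N →ₗ[R] E} (hs : ∀ x, p (s x) = x) :
    ∃ σ : A →ₗ[R] E, (∀ x, p (σ x) = x) ∧ ∀ x : N, σ x = s x := by
  obtain ⟨t, ht⟩ := hext _ _ _ (injective_mkQ_comp_of_section hi hexact hs)
    (surjective_mapQ_of_section hp hs)
    (LinearMap.exact_iff.1 (exact_mkQ_comp_mapQ_of_section hexact hs)).symm
  have hΦ := injective_prod_mkQ_of_section hs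
  let σ : A →ₗ[R] E := (LinearEquiv.ofInjective _ hΦ).symm.toLinearMap ∘ₗ
    (LinearMap.id.prod (t ∘ₗ N.mkQ)).codRestrict _ fun x =>
      mk_mem_range_prod_mkQ_of_section hs (LinearMap.congr_fun ht (N.mkQ x))
  have hσ : ∀ x, p.prod (LinearMap.range s).mkQ (σ x) = (x, t (N.mkQ x)) := fun x => by
    rw [← LinearEquiv.ofInjective_apply (h := hΦ)]
    simp only [σ, LinearMap.comp_apply, LinearEquiv.coe_coe, LinearEquiv.apply_symm_apply]
    rfl
  refine ⟨σ, fun x => congrArg Prod.fst (hσ x), fun x => hΦ ?_⟩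
  rw [hσ]
  simp [hs, (Submodule.Quotient.mk_eq_zero _).2 x.2,
    (Submodule.Quotient.mk_eq_zero _).2 (LinearMap.mem_range_self s x)]

theorem IsPartialSection.exists_extension (hi : Function.Injective i)
    (hp : Function.Surjective p) (hexact : Function.Exact i p) {f : A →ₗ.[R] E}
    (hf : IsPartialSection p f) (hle : f.domain ≤ N)
    (hext : Ext1Zero R (N ⧸ f.domain.comap N.subtype) B) :
    ∃ g : A →ₗ.[R] E, f ≤ g ∧ g.domain = N ∧ IsPartialSection p g := by
  let p₁ : N.comap p →ₗ[R] N := p.restrict fun _ h => h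
  let i₁ : B →ₗ[R] N.comap p :=
    i.codRestrict _ fun b => by simp [hexact.apply_apply_eq_zero b]
  let s₁ : f.domain.comap N.subtype →ₗ[R] N.comap p :=
    (f.toFun ∘ₗ N.subtype.restrict fun _ h => h).codRestrict _ fun y => by
      simp [hf _]
  have hi₁ : Function.Injective i₁ := fun b b' h => hi (congrArg Subtype.val h)
  have hp₁ : Function.Surjective p₁ := fun y => by
    obtain ⟨e, he⟩ := hp y
    exact ⟨⟨e, by simp [he]⟩, Subtype.ext he⟩
  have hexact₁ : Function.Exact i₁ p₁ := fun e => by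
    simpa [p₁, i₁, Subtype.ext_iff] using hexact e
  obtain ⟨σ, hσp, hσs⟩ :=
    exists_extension_of_ext1Zero_quotient hi₁ hp₁ hexact₁ hext (s := s₁) fun y => Subtype.ext (hf _)
  refine ⟨⟨N, (N.comap p).subtype ∘ₗ σ⟩, ⟨hle, fun x y hxy => ?_⟩, rfl,
    fun y => congrArg Subtype.val (hσp y)⟩
  obtain ⟨y, hy⟩ := y
  simp only at hxy
  subst hxy
  exact (congrArg Subtype.val (hσs ⟨⟨x, hy⟩, x.2⟩)).symm

end Extension

/-- **Eklof's Lemma.**  If `⟨M i : i ≤ ζ⟩` is a continuous increasing chain of submodules of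
`A` with `M 0 = 0` and `M ζ = A`, such that `Ext¹(M (i+1) ⧸ M i, B) = 0` for all `i < ζ`,
then `Ext¹(A, B) = 0`. -/
theorem eklof_lemma {R : Type v} [Ring R] {A B : Type u} [AddCommGroup A] [Module R A]
    [AddCommGroup B] [Module R B] (ζ : Ordinal) (M : Ordinal → Submodule R A)
    (hmono : Monotone M) (h0 : M 0 = ⊥) (htop : M ζ = ⊤)
    (hcont : ∀ i ≤ ζ, Order.IsSuccLimit i → M i = ⨆ j < i, M j)
    (hsucc : ∀ i < ζ,
      Ext1Zero R (↥(M (i + 1)) ⧸ (M i).comap (M (i + 1)).subtype) B) :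
    Ext1Zero R A B := by
  intro E _ _ i p hi hp hip
  have hexact : Function.Exact i p := LinearMap.exact_iff.2 hip.symm
  have hbot : ((0, ⊥) : Ordinal × (A →ₗ.[R] E)) ∈ sectionsAlong p M ζ :=
    ⟨zero_le, h0.symm, isPartialSection_bot⟩
  obtain ⟨⟨j, f⟩, -, hmax⟩ := zorn_le_nonempty₀ _ (fun c hsub hc y hy =>
    exists_upperBound_of_isChain_sectionsAlong hmono hcont hsub hc ⟨y, hy⟩) _ hbot
  obtain ⟨hjζ, hdom, hf⟩ := hmax.prop
  have hj : j = ζ := by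
    by_contra hne
    have hlt : j < ζ := lt_of_le_of_ne hjζ hne
    have hj_lt : j < j + 1 := Order.lt_add_one_iff.2 le_rfl
    obtain ⟨g, hfg, hgdom, hg⟩ := hf.exists_extension hi hp hexact
      (hdom ▸ hmono hj_lt.le) (hdom ▸ hsucc j hlt)
    have hgj := hmax.2 (y := (j + 1, g)) ⟨Order.add_one_le_of_lt hlt, hgdom, hg⟩ ⟨hj_lt.le, hfg⟩
    exact hj_lt.not_ge hgj.1
  exact hf.exists_section (hdom.trans (hj ▸ htop))
end

section
/- Let B be a pure-injective R-module, A an R-module with Ext^1_R(A, B) = 0, and N a pure submodule of A. Then Ext^1_R(A/N, B) = 0. -/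
universe u v

/-- A submodule `K` of `F` is *pure* if every finite system of `R`-linear equations with
constants in `K` that is solvable in `F` is solvable in `K`. -/
def IsPureSubmodule {R : Type v} [Ring R] {F : Type u} [AddCommGroup F] [Module R F]
    (K : Submodule R F) : Prop :=
  ∀ (m n : ℕ) (M : Matrix (Fin m) (Fin n) R) (b : Fin m → F),
    (∀ i, b i ∈ K) →
    (∃ x : Fin n → F, ∀ i, ∑ j, M i j • x j = b i) →
    (∃ x : Fin n → K, ∀ i, ∑ j, M i j • (x j : F) = b i)

/-- `B` is *pure-injective*: every homomorphism from a pure submodule `K` of a module `L`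
into `B` extends to `L`. -/
def PureInjective (R : Type v) [Ring R] (B : Type u) [AddCommGroup B] [Module R B] : Prop :=
  ∀ (L : Type u) [AddCommGroup L] [Module R L],
    ∀ (K : Submodule R L), IsPureSubmodule K →
      ∀ f : K →ₗ[R] B, ∃ g : L →ₗ[R] B, ∀ x : K, g x = f x

/-!
Lift the quotient map `A → A ⧸ N` through a given extension `0 → B → E → A ⧸ N → 0`: this is
possible because the pulled-back extension of `A` by `B` splits. The lift `t` sends `N` into `B`,
and `t|_N : N → B` extends to `g : A → B` since `B` is pure-injective and `N` is pure. Then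
`t - g` vanishes on `N` and still lifts the quotient map, so it descends to a section of
`E → A ⧸ N`.
-/

section

variable {R : Type*} [Ring R] {B E F : Type*} [AddCommGroup B] [Module R B]
  [AddCommGroup E] [Module R E] [AddCommGroup F] [Module R F]

theorem LinearMap.exists_comp_eq_of_range_le {i : B →ₗ[R] E} (hi : Function.Injective i)
    {t : F →ₗ[R] E} (ht : LinearMap.range t ≤ LinearMap.range i) :
    ∃ f : F →ₗ[R] B, i ∘ₗ f = t := by
  refine ⟨(LinearEquiv.ofInjective i hi).symm.toLinearMap ∘ₗ t.codRestrict _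
    fun x ↦ ht (LinearMap.mem_range_self t x), ?_⟩
  ext x
  exact congrArg Subtype.val ((LinearEquiv.ofInjective i hi).apply_symm_apply _)

end

section Pullback

variable {R : Type v} [Ring R] {A B E : Type u} {C : Type*}
  [AddCommGroup A] [Module R A] [AddCommGroup B] [Module R B]
  [AddCommGroup E] [Module R E] [AddCommGroup C] [Module R C]

def LinearMap.pullback (φ : A →ₗ[R] C) (p : E →ₗ[R] C) : Submodule R (A × E) :=
  LinearMap.ker (φ ∘ₗ LinearMap.fst R A E - p ∘ₗ LinearMap.snd R A E)

theorem LinearMap.mem_pullback {φ : A →ₗ[R] C} {p : E →ₗ[R] C} {x : A × E} :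
    x ∈ φ.pullback p ↔ φ x.1 = p x.2 := by
  simp [LinearMap.pullback, sub_eq_zero]

theorem Ext1Zero.exists_comp_eq (hA : Ext1Zero R A B) {i : B →ₗ[R] E} {p : E →ₗ[R] C}
    (hi : Function.Injective i) (hp : Function.Surjective p)
    (hip : LinearMap.range i = LinearMap.ker p) (φ : A →ₗ[R] C) :
    ∃ t : A →ₗ[R] E, p ∘ₗ t = φ := by
  have hpi (b : B) : p (i b) = 0 := LinearMap.mem_ker.1 (hip ▸ LinearMap.mem_range_self i b)
  let P := φ.pullback p
  let i' : B →ₗ[R] P := (LinearMap.prod 0 i).codRestrict P fun b ↦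
    LinearMap.mem_pullback.2 (by simp [hpi])
  let p' : P →ₗ[R] A := LinearMap.fst R A E ∘ₗ P.subtype
  have hi' : Function.Injective i' := fun b b' h ↦ hi (congrArg (fun x : P ↦ (x : A × E).2) h)
  have hp' : Function.Surjective p' := fun a ↦ by
    obtain ⟨e, he⟩ := hp (φ a)
    exact ⟨⟨(a, e), LinearMap.mem_pullback.2 he.symm⟩, rfl⟩
  have hip' : LinearMap.range i' = LinearMap.ker p' := by
    ext ⟨⟨a, e⟩, hx⟩
    have hx : φ a = p e := LinearMap.mem_pullback.1 hx
    constructor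
    · rintro ⟨b, hb⟩
      exact congrArg (fun x : P ↦ (x : A × E).1) hb.symm
    · intro (ha : a = 0)
      subst ha
      obtain ⟨b, rfl⟩ : e ∈ LinearMap.range i := hip ▸ (by simpa using hx.symm)
      exact ⟨b, rfl⟩
  obtain ⟨s, hs⟩ := hA P i' p' hi' hp' hip'
  refine ⟨LinearMap.snd R A E ∘ₗ P.subtype ∘ₗ s, LinearMap.ext fun a ↦ ?_⟩
  have hsa : (s a : A × E).1 = a := LinearMap.congr_fun hs a
  simpa [hsa] using (LinearMap.mem_pullback.1 (s a).2).symm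

end Pullback

/-- If `B` is pure-injective, `Ext¹(A, B) = 0`, and `N` is a pure submodule of `A`,
then `Ext¹(A ⧸ N, B) = 0`. -/
theorem ext1_zero_quotient_of_pure {R : Type v} [Ring R] {A B : Type u}
    [AddCommGroup A] [Module R A] [AddCommGroup B] [Module R B]
    (hB : PureInjective R B) (hA : Ext1Zero R A B)
    (N : Submodule R A) (hN : IsPureSubmodule N) :
    Ext1Zero R (A ⧸ N) B := by
  intro E _ _ i p hi hp hip
  obtain ⟨t, ht⟩ := hA.exists_comp_eq hi hp hip N.mkQ
  have htN : LinearMap.range (t ∘ₗ N.subtype) ≤ LinearMap.range i := by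
    rintro _ ⟨n, rfl⟩
    rw [hip, LinearMap.mem_ker]
    simpa [(Submodule.Quotient.mk_eq_zero N).2 n.2] using LinearMap.congr_fun ht n
  obtain ⟨f, hf⟩ := LinearMap.exists_comp_eq_of_range_le hi htN
  obtain ⟨g, hg⟩ := hB A N hN f
  have hker : N ≤ LinearMap.ker (t - i ∘ₗ g) := fun n hn ↦ by
    simp [hg ⟨n, hn⟩, ← LinearMap.comp_apply i f, hf]
  refine ⟨N.liftQ _ hker, Submodule.linearMap_qext N (LinearMap.ext fun a ↦ ?_)⟩
  have hpi : p (i (g a)) = 0 := LinearMap.mem_ker.1 (hip ▸ LinearMap.mem_range_self i (g a))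
  simp [hpi, ← LinearMap.comp_apply p t, ht]
end

section
/- If ⟨P_i : i ≤ ζ⟩ is a continuous increasing chain of R-modules with P_0 = 0 such that each successive quotient P_{i+1}/P_i is projective, then every inclusion P_i → P_{i+1} splits, and P_ζ is isomorphic to the direct sum ⊕_{i<ζ} P_{i+1}/P_i; in particular P_ζ is projective. -/
/-!
Projectivity of `P (i + 1) / P i` gives a complement, hence a submodule `Z i ≅ P (i + 1) / P i`
with `P i ⊕ Z i = P (i + 1)` internally. Transfinite induction, using continuity at limits, gives
`P i = ⨆ j < i, Z j`; as `Z i` meets `P i` trivially, the `Z i` are independent, so `A = P ζ` is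
their internal direct sum, and a direct sum of projective modules is projective.
-/

universe u v

section Lattice

variable {α : Type*} [CompleteLattice α]

theorem iSupIndep_of_disjoint_biSup_lt [IsModularLattice α] [IsCompactlyGenerated α]
    {ι : Type*} [LinearOrder ι] {t : ι → α} (h : ∀ i, Disjoint (t i) (⨆ j < i, t j)) :
    iSupIndep t := by
  classical
  refine iSupIndep_iff_supIndep.mpr fun s => ?_
  induction s using Finset.induction_on_max with
  | empty => exact Finset.supIndep_empty t
  | insert i s hlt ih =>
    refine ih.insert ((h i).mono_right (Finset.sup_le fun j hj => ?_))
    exact le_iSup₂ (f := fun j (_ : j < i) => t j) j (hlt j hj)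

namespace Ordinal

variable {ζ : Ordinal} {P Z : Ordinal → α}

theorem eq_biSup_lt_of_sup_eq_add_one (h0 : P 0 = ⊥)
    (hcont : ∀ i ≤ ζ, Order.IsSuccLimit i → P i = ⨆ j < i, P j)
    (hsucc : ∀ i < ζ, P i ⊔ Z i = P (i + 1)) : ∀ i ≤ ζ, P i = ⨆ j < i, Z j := by
  intro i
  induction i using Ordinal.limitRecOn with
  | zero => simp [h0]
  | add_one o ih =>
    intro ho
    have hoζ : o < ζ := Order.add_one_le_iff.mp ho
    rw [← hsucc o hoζ, ih hoζ.le]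
    simp_rw [Order.lt_add_one_iff, biSup_le_eq_sup]
  | limit o ho ih =>
    intro hoζ
    rw [hcont o hoζ ho]
    refine le_antisymm (iSup₂_le fun j hj => ?_) (iSup₂_le fun k hk => ?_)
    · rw [ih j hj (hj.le.trans hoζ)]
      exact iSup₂_le fun k hk => le_iSup₂ (f := fun k (_ : k < o) => Z k) k (hk.trans hj)
    · have hk' : k + 1 < o := ho.add_one_lt hk
      calc Z k ≤ P (k + 1) := hsucc k (hk.trans_le hoζ) ▸ le_sup_right
        _ ≤ ⨆ j < o, P j := le_iSup₂ (f := fun j (_ : j < o) => P j) (k + 1) hk'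

theorem iSup_subtype_lt_eq_of_sup_eq_add_one (h0 : P 0 = ⊥)
    (hcont : ∀ i ≤ ζ, Order.IsSuccLimit i → P i = ⨆ j < i, P j)
    (hsucc : ∀ i < ζ, P i ⊔ Z i = P (i + 1)) : ⨆ j : {j // j < ζ}, Z j = P ζ := by
  rw [iSup_subtype, eq_biSup_lt_of_sup_eq_add_one h0 hcont hsucc ζ le_rfl]

theorem iSupIndep_of_sup_eq_add_one [IsModularLattice α] [IsCompactlyGenerated α]
    (h0 : P 0 = ⊥) (hcont : ∀ i ≤ ζ, Order.IsSuccLimit i → P i = ⨆ j < i, P j)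
    (hsucc : ∀ i < ζ, P i ⊔ Z i = P (i + 1)) (hdisj : ∀ i < ζ, Disjoint (P i) (Z i)) :
    iSupIndep fun j : {j // j < ζ} => Z j := by
  refine iSupIndep_of_disjoint_biSup_lt fun j => (hdisj j j.2).symm.mono_right ?_
  rw [eq_biSup_lt_of_sup_eq_add_one h0 hcont hsucc j j.2.le]
  exact iSup₂_le fun k hk => le_iSup₂ (f := fun k (_ : k < j.1) => Z k) k.1 hk

end Ordinal

end Lattice

namespace Submodule

variable {R : Type*} {M : Type*} [Ring R] [AddCommGroup M] [Module R M]

theorem exists_isCompl_of_projective_quotient (p : Submodule R M)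
    [Module.Projective R (M ⧸ p)] : ∃ q : Submodule R M, IsCompl p q := by
  obtain ⟨s, hs⟩ := p.mkQ.exists_rightInverse_of_surjective p.range_mkQ
  have hidem : IsIdempotentElem (s ∘ₗ p.mkQ) := by
    rw [IsIdempotentElem, Module.End.mul_eq_comp, LinearMap.comp_assoc,
      ← LinearMap.comp_assoc p.mkQ, hs, LinearMap.id_comp]
  have hker : LinearMap.ker (s ∘ₗ p.mkQ) = p := by
    rw [LinearMap.ker_comp_of_ker_eq_bot _ (LinearMap.ker_eq_bot_of_inverse hs), ker_mkQ]
  exact ⟨_, hker ▸ (LinearMap.IsIdempotentElem.isCompl hidem).symm⟩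

variable {p q : Submodule R M} {Y : Submodule R q}

theorem sup_map_subtype_eq_of_isCompl_comap (hpq : p ≤ q) (h : IsCompl (p.comap q.subtype) Y) :
    p ⊔ Y.map q.subtype = q := by
  have := congrArg (map q.subtype) h.sup_eq_top
  rwa [map_sup, map_comap_subtype, inf_eq_right.mpr hpq, map_top, range_subtype] at this

theorem disjoint_map_subtype_of_disjoint_comap (h : Disjoint (p.comap q.subtype) Y) :
    Disjoint p (Y.map q.subtype) := by
  have := disjoint_map q.injective_subtype h
  rw [map_comap_subtype] at this
  rw [disjoint_iff, ← inf_eq_right.mpr (map_subtype_le q Y), ← inf_assoc, inf_comm p,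
    ← disjoint_iff]
  exact this

end Submodule

/-- If `⟨P i : i ≤ ζ⟩` is a continuous increasing chain of submodules of `A` with `P 0 = 0`,
`P ζ = A`, and each successive quotient `P (i+1) ⧸ P i` projective, then every inclusion
`P i → P (i+1)` splits, and `A` is isomorphic to the direct sum of the successive quotients;
in particular `A` is projective. -/
theorem filtration_projective_quotients {R : Type v} [Ring R] {A : Type u}
    [AddCommGroup A] [Module R A] (ζ : Ordinal) (P : Ordinal → Submodule R A)
    (hmono : Monotone P) (h0 : P 0 = ⊥) (htop : P ζ = ⊤)
    (hcont : ∀ i ≤ ζ, Order.IsSuccLimit i → P i = ⨆ j < i, P j)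
    (hproj : ∀ i < ζ,
      Module.Projective R (↥(P (i + 1)) ⧸ (P i).comap (P (i + 1)).subtype)) :
    (∀ i < ζ, ∃ Y : Submodule R (P (i + 1)),
        IsCompl ((P i).comap (P (i + 1)).subtype) Y) ∧
      Nonempty (A ≃ₗ[R] DirectSum {i : Ordinal // i < ζ}
        (fun i => ↥(P (i.1 + 1)) ⧸ (P i.1).comap (P (i.1 + 1)).subtype)) ∧
      Module.Projective R A := by
  have hsplit : ∀ i < ζ, ∃ Y : Submodule R (P (i + 1)),
      IsCompl ((P i).comap (P (i + 1)).subtype) Y := fun i hi =>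
    have := hproj i hi
    Submodule.exists_isCompl_of_projective_quotient _
  -- `Y i` is chosen for every ordinal (junk for `i ≥ ζ`), so that `Z` is indexed by `Ordinal`.
  choose Y hY using fun i => if hi : i < ζ then (hsplit i hi).imp fun _ h _ => h
    else ⟨⊥, fun h => absurd h hi⟩
  let Z : Ordinal → Submodule R A := fun i => (Y i).map (P (i + 1)).subtype
  have hsucc : ∀ i < ζ, P i ⊔ Z i = P (i + 1) := fun i hi =>
    Submodule.sup_map_subtype_eq_of_isCompl_comap (hmono le_self_add) (hY i hi)
  have hint : DirectSum.IsInternal fun j : {j // j < ζ} => Z j :=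
    (DirectSum.isInternal_submodule_iff_iSupIndep_and_iSup_eq_top _).mpr
      ⟨Ordinal.iSupIndep_of_sup_eq_add_one h0 hcont hsucc fun i hi =>
          Submodule.disjoint_map_subtype_of_disjoint_comap (hY i hi).disjoint,
        (Ordinal.iSup_subtype_lt_eq_of_sup_eq_add_one h0 hcont hsucc).trans htop⟩
  let e : DirectSum {i : Ordinal // i < ζ}
      (fun i => ↥(P (i.1 + 1)) ⧸ (P i.1).comap (P (i.1 + 1)).subtype) ≃ₗ[R] A :=
    (DFinsupp.mapRange.linearEquiv fun j : {i // i < ζ} =>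
        (Submodule.quotientEquivOfIsCompl _ _ (hY j j.2)).trans
          (Submodule.equivMapOfInjective _ (Submodule.injective_subtype _) _)).trans
      (LinearEquiv.ofBijective (DirectSum.coeLinearMap fun j : {j // j < ζ} => Z j) hint)
  have := fun j : {i // i < ζ} => hproj j j.2
  exact ⟨hsplit, ⟨e.symm⟩, .of_equiv e⟩
end

section
/- The class of flat R-modules is closed under transfinite extensions: if ⟨M_i : i ≤ ζ⟩ is a continuous increasing chain of R-modules with M_0 = 0 and each M_{i+1}/M_i flat, then M_ζ is flat. -/
universe u v

/-!
Transfinite induction shows that every `M i` with `i ≤ ζ` is flat. At a successor step, flatness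
is closed under extensions: an element of `A ⊗ I` killed in `A ⊗ R` is killed in `(A ⧸ N) ⊗ R`,
hence comes from `N ⊗ I`, where `N ⊗ I → A ⊗ R` is injective. At a limit step `M i` is a directed
union, and a module is flat as soon as each finitely generated submodule lies in a flat one, because
every element of `A ⊗ I` already comes from `J ⊗ I` for a finitely generated `J ≤ A`.
-/

open LinearMap TensorProduct

namespace Module.Flat

variable {R : Type v} [CommRing R] {A : Type u} [AddCommGroup A] [Module R A]

theorem of_submodule_of_quotient (N : Submodule R A) [Flat R N] [Flat R (A ⧸ N)] :
    Flat R A := by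
  refine iff_lTensor_injective'.mpr fun I ↦ (injective_iff_map_eq_zero _).mpr fun x hx ↦ ?_
  have hx' : rTensor I N.mkQ x = 0 := by
    apply lTensor_preserves_injective_linearMap (M := A ⧸ N) _ I.injective_subtype
    rw [map_zero, ← comp_apply, lTensor_comp_rTensor, ← rTensor_comp_lTensor, comp_apply, hx,
      map_zero]
  obtain ⟨y, rfl⟩ := (_root_.rTensor_exact I (exact_subtype_mkQ N) N.mkQ_surjective x).mp hx'
  have hy : TensorProduct.map N.subtype I.subtype y = 0 := by
    rwa [← lTensor_comp_rTensor, comp_apply]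
  rw [map_injective_of_flat_flat' _ _ N.injective_subtype I.injective_subtype
    (hy.trans (map_zero _).symm), map_zero]

theorem of_forall_fg_le_flat
    (h : ∀ J : Submodule R A, J.FG → ∃ N : Submodule R A, J ≤ N ∧ Flat R N) : Flat R A := by
  refine iff_lTensor_injective'.mpr fun I ↦ (injective_iff_map_eq_zero _).mpr fun x hx ↦ ?_
  obtain ⟨J, hJ, y, rfl⟩ := Submodule.exists_fg_le_eq_rTensor_subtype x
  obtain ⟨N, hJN, hN⟩ := h J hJ
  have hy : TensorProduct.map N.subtype I.subtype (rTensor I (Submodule.inclusion hJN) y) = 0 := by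
    rwa [← lTensor_comp_rTensor, comp_apply, ← rTensor_comp_apply,
      Submodule.subtype_comp_inclusion]
  rw [← Submodule.subtype_comp_inclusion J N hJN, rTensor_comp_apply,
    map_injective_of_flat_flat' _ _ N.injective_subtype I.injective_subtype
      (hy.trans (map_zero _).symm), map_zero]

theorem comap_subtype_of_le {N P : Submodule R A} (h : N ≤ P) [Flat R N] :
    Flat R (N.comap P.subtype) :=
  of_linearEquiv (Submodule.comapSubtypeEquivOfLe h)

theorem iSup_of_directed {ι : Type*} [Nonempty ι] (p : ι → Submodule R A)
    (hdir : Directed (· ≤ ·) p) [∀ i, Flat R (p i)] : Flat R ↥(⨆ i, p i) := by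
  refine of_forall_fg_le_flat fun J hJ ↦ ?_
  obtain ⟨_, ⟨i, rfl⟩, hJi⟩ :=
    (CompleteLattice.isCompactElement_iff_le_of_directed_sSup_le _ _).mp
      ((Submodule.fg_iff_compact _).mp (hJ.map (⨆ i, p i).subtype)) (Set.range p)
      (Set.range_nonempty p) hdir.directedOn_range
      (by simpa only [sSup_range] using Submodule.map_subtype_le _ J)
  exact ⟨(p i).comap (⨆ i, p i).subtype, Submodule.map_le_iff_le_comap.mp hJi,
    comap_subtype_of_le (le_iSup p i)⟩

end Module.Flat

/-- The class of flat `R`-modules is closed under transfinite extensions: if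
`⟨M i : i ≤ ζ⟩` is a continuous increasing chain of submodules of `A` with `M 0 = 0`,
`M ζ = A`, and each `M (i+1) ⧸ M i` flat, then `A` is flat. -/
theorem flat_of_filtration {R : Type v} [CommRing R] {A : Type u}
    [AddCommGroup A] [Module R A] (ζ : Ordinal) (M : Ordinal → Submodule R A)
    (hmono : Monotone M) (h0 : M 0 = ⊥) (htop : M ζ = ⊤)
    (hcont : ∀ i ≤ ζ, Order.IsSuccLimit i → M i = ⨆ j < i, M j)
    (hflat : ∀ i < ζ,
      Module.Flat R (↥(M (i + 1)) ⧸ (M i).comap (M (i + 1)).subtype)) :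
    Module.Flat R A := by
  suffices h : ∀ i ≤ ζ, Module.Flat R (M i) by
    have := h ζ le_rfl
    rw [htop] at this
    exact .of_linearEquiv Submodule.topEquiv.symm
  intro i
  induction i using Ordinal.limitRecOn with
  | zero => intro; rw [h0]; infer_instance
  | add_one j ih =>
    intro hj
    have hlt : j < j + 1 := Order.lt_add_one_iff.mpr le_rfl
    have hjζ : j < ζ := hlt.trans_le hj
    have := ih hjζ.le
    have := hflat j hjζ
    have := Module.Flat.comap_subtype_of_le (hmono hlt.le)
    exact .of_submodule_of_quotient ((M j).comap (M (j + 1)).subtype)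
  | limit i hi ih =>
    intro hiζ
    have : Nonempty {j // j < i} := ⟨⟨0, hi.bot_lt⟩⟩
    have (j : {j // j < i}) : Module.Flat R (M j) := ih j j.2 (j.2.le.trans hiζ)
    rw [hcont i hiζ hi, iSup_subtype']
    exact Module.Flat.iSup_of_directed _ (hmono.comp (Subtype.mono_coe _)).directed_le
end
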